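/- Let Λ = ℤ/ℓ^r ℤ and let Λ[[X,Y]] be the power series ring in two variables over Λ. Let J_k be the ideal generated by ((X+1)^{ℓ^k} - 1, (Y+1)^{ℓ^k} - 1) and let 𝔞 = (X,Y) be the augmentation ideal. Then J_{r+k-2} ⊆ 𝔞^k for all k ≥ 1. -/

import Mathlib

/-!
Put `I = (ℓ, X)`. Since `ℓ ∈ I`, raising `u + 1` to the `ℓ`-th power sends `u ∈ I^j` to
`(u + 1)^ℓ - 1 = u · ∑_{i<ℓ} (u + 1)^i ∈ I^j · I`, the sum being `≡ ℓ ≡ 0 mod I`.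
Iterating, `(X + 1)^{ℓ^m} - 1 ∈ I^{m+1}`, and expanding `I^{r+k-1} = ((ℓ) ⊔ (X))^{r+k-1}`
binomially puts it in `(ℓ)^r ⊔ (X)^k = (X)^k`, because `ℓ^r = 0` in `ℤ/ℓ^r ℤ`.
-/

open MvPowerSeries

namespace Ideal

lemma sup_pow_add_add_one_le_pow_succ_sup_pow_succ {R : Type*} [CommSemiring R]
    (I J : Ideal R) (n m : ℕ) :
    (I ⊔ J) ^ (n + m + 1) ≤ I ^ (n + 1) ⊔ J ^ (m + 1) := by
  rw [← add_eq_sup, ← add_eq_sup, add_pow, sum_eq_sup]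
  refine Finset.sup_le fun i hi ↦ ?_
  by_cases hn : n + 1 ≤ i
  · exact mul_le_left.trans (mul_le_left.trans ((pow_le_pow_right hn).trans le_sup_left))
  · refine mul_le_left.trans (mul_le_right.trans ((pow_le_pow_right ?_).trans le_sup_right))
    rw [Finset.mem_range] at hi
    omega

variable {R : Type*} [CommRing R]

lemma geom_sum_add_one_mem {I : Ideal R} {u : R} (hu : u ∈ I) {n : ℕ} (hn : (n : R) ∈ I) :
    ∑ i ∈ Finset.range n, (u + 1) ^ i ∈ I := by
  rw [← Quotient.eq_zero_iff_mem] at hu hn ⊢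
  simpa [hu] using hn

lemma add_one_pow_sub_one_mem_mul {I J : Ideal R} {u : R} (huI : u ∈ I) (huJ : u ∈ J) {n : ℕ}
    (hn : (n : R) ∈ I) : (u + 1) ^ n - 1 ∈ I * J := by
  rw [← geom_sum_mul, add_sub_cancel_right]
  exact mul_mem_mul (geom_sum_add_one_mem huI hn) huJ

lemma add_one_pow_pow_sub_one_mem_pow {I : Ideal R} {a : R} (ha : a ∈ I) {n : ℕ}
    (hn : (n : R) ∈ I) (m : ℕ) : (a + 1) ^ n ^ m - 1 ∈ I ^ (m + 1) := by
  induction m with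
  | zero => simpa using ha
  | succ m ih =>
    have hu : (a + 1) ^ n ^ m - 1 ∈ I := pow_le_self m.succ_ne_zero ih
    have h := add_one_pow_sub_one_mem_mul hu ih hn
    rwa [sub_add_cancel, ← pow_mul, ← pow_succ, ← pow_succ'] at h

lemma add_one_pow_pow_sub_one_mem_span_pow {n r : ℕ} (hn : (n : R) ^ (r + 1) = 0) (x : R)
    (k : ℕ) : (x + 1) ^ n ^ (r + k) - 1 ∈ span {x} ^ (k + 1) := by
  have hx : x ∈ span {(n : R)} ⊔ span {x} := mem_sup_right (mem_span_singleton_self x)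
  have hnI : (n : R) ∈ span {(n : R)} ⊔ span {x} := mem_sup_left (mem_span_singleton_self _)
  have h := sup_pow_add_add_one_le_pow_succ_sup_pow_succ _ _ r k
    (add_one_pow_pow_sub_one_mem_pow hx hnI (r + k))
  rwa [span_singleton_pow, hn, span_singleton_eq_bot.2 rfl, bot_sup_eq] at h

end Ideal

theorem stmt0_general (ℓ r k : ℕ) (hr : 1 ≤ r) (hk : 1 ≤ k) :
    Ideal.span {((MvPowerSeries.X 0 + 1) ^ ℓ ^ (r + k - 2) - 1 :
        MvPowerSeries (Fin 2) (ZMod (ℓ ^ r))),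
      (MvPowerSeries.X 1 + 1) ^ ℓ ^ (r + k - 2) - 1} ≤
    (Ideal.span {(MvPowerSeries.X 0 : MvPowerSeries (Fin 2) (ZMod (ℓ ^ r))),
      MvPowerSeries.X 1}) ^ k := by
  obtain ⟨r, rfl⟩ := Nat.exists_eq_add_of_le' hr
  obtain ⟨k, rfl⟩ := Nat.exists_eq_add_of_le' hk
  have hℓr : (ℓ : MvPowerSeries (Fin 2) (ZMod (ℓ ^ (r + 1)))) ^ (r + 1) = 0 := by
    rw [← Nat.cast_pow, ← map_natCast (C (σ := Fin 2)), ZMod.natCast_self, map_zero]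
  have hexp : r + 1 + (k + 1) - 2 = r + k := by omega
  rw [Ideal.span_le, hexp]
  rintro _ (rfl | rfl) <;>
    refine Ideal.pow_right_mono (Ideal.span_mono ?_) _
      (Ideal.add_one_pow_pow_sub_one_mem_span_pow hℓr _ k) <;> simp

/-- Let `Λ = ℤ/ℓ^r ℤ` and `Λ[[X,Y]]` the power series ring in two
variables over `Λ`.  Let `J_k` be the ideal generated by
`((X+1)^{ℓ^k} - 1, (Y+1)^{ℓ^k} - 1)` and `𝔞 = (X,Y)` the augmentation ideal.
Then `J_{r+k-2} ⊆ 𝔞^k` for all `k ≥ 1`. -/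
theorem stmt0 (ℓ r k : ℕ) (hℓ : ℓ.Prime) (hr : 1 ≤ r) (hk : 1 ≤ k) :
    Ideal.span {((MvPowerSeries.X 0 + 1) ^ ℓ ^ (r + k - 2) - 1 :
        MvPowerSeries (Fin 2) (ZMod (ℓ ^ r))),
      (MvPowerSeries.X 1 + 1) ^ ℓ ^ (r + k - 2) - 1} ≤
    (Ideal.span {(MvPowerSeries.X 0 : MvPowerSeries (Fin 2) (ZMod (ℓ ^ r))),
      MvPowerSeries.X 1}) ^ k :=
  stmt0_general ℓ r k hr hk
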